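/- Let k, z, ℓ be positive integers and let X_1, ..., X_k be subsets of {1,...,ℓ}, each of size at least ℓ/z. Let Π_1, ..., Π_k be independent uniformly random permutations of {1,...,ℓ}. Then the probability that the intersection Π_1(X_1) ∩ Π_2(X_2) ∩ ... ∩ Π_k(X_k) is empty is at most exp(−ℓ/z^k). -/

import Mathlib

open MeasureTheory

/-- The uniform probability measure on a finite type (with the `⊤` σ-algebra). -/
noncomputable def uniformMeasure (α : Type*) [Fintype α] : @Measure α ⊤ :=
  (Fintype.card α : ENNReal)⁻¹ • @Measure.count α ⊤

open Finset

section Count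
variable {ℓ : ℕ}

open scoped Classical in
/-- Number of permutations `σ` with `σ(X) ∩ R = ∅`. -/
noncomputable def permCount (X R : Finset (Fin ℓ)) : ℕ :=
  (Finset.univ.filter (fun σ : Equiv.Perm (Fin ℓ) => ∀ x ∈ X, σ x ∉ R)).card

lemma permCount_empty (X : Finset (Fin ℓ)) : permCount X ∅ = Nat.factorial ℓ := by
  classical
  simp [permCount, Finset.filter_true_of_mem, Fintype.card_perm]

lemma permCount_identity (X R : Finset (Fin ℓ)) (j : Fin ℓ) (hj : j ∉ R) :
    (ℓ - R.card - X.card) * permCount X R = (ℓ - R.card) * permCount X (insert j R) := by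
  classical
  set A : Finset (Equiv.Perm (Fin ℓ)) :=
    Finset.univ.filter (fun σ => ∀ x ∈ X, σ x ∉ R) with hA
  set A' : Finset (Equiv.Perm (Fin ℓ)) :=
    Finset.univ.filter (fun σ => ∀ x ∈ X, σ x ∉ insert j R) with hA'
  have hXcard : ∀ σ : Equiv.Perm (Fin ℓ), (X.image σ).card = X.card := fun σ =>
    Finset.card_image_of_injective _ σ.injective
  -- card of S1
  have h1 : (A.sigma (fun σ => (R ∪ X.image σ)ᶜ)).card = permCount X R * (ℓ - R.card - X.card) := by
    rw [Finset.card_sigma]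
    have : ∀ σ ∈ A, ((R ∪ X.image σ)ᶜ).card = ℓ - R.card - X.card := by
      intro σ hσ
      have hdisj : Disjoint R (X.image σ) := by
        rw [Finset.disjoint_right]
        intro a ha
        simp only [Finset.mem_image] at ha
        obtain ⟨x, hx, rfl⟩ := ha
        exact (Finset.mem_filter.mp hσ).2 x hx
      rw [Finset.card_compl, Finset.card_union_of_disjoint hdisj, hXcard,
        Fintype.card_fin, Nat.sub_sub]
    rw [Finset.sum_congr rfl this, Finset.sum_const, smul_eq_mul]
    rfl
  have h2 : (A'.sigma (fun _ => Rᶜ)).card = permCount X (insert j R) * (ℓ - R.card) := by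
    rw [Finset.card_sigma, Finset.sum_const, smul_eq_mul, Finset.card_compl, Fintype.card_fin]
    rfl
  have hbij : (A.sigma (fun σ => (R ∪ X.image σ)ᶜ)).card
      = (A'.sigma (fun _ => Rᶜ)).card := by
    refine Finset.card_nbij' (fun p => ⟨Equiv.swap p.2 j * p.1, p.2⟩)
      (fun p => ⟨Equiv.swap p.2 j * p.1, p.2⟩) ?_ ?_ ?_ ?_
    · rintro ⟨σ, v⟩ hp
      simp only [Finset.mem_coe] at hp ⊢
      simp only [Finset.mem_sigma, hA, Finset.mem_filter, Finset.mem_compl,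
        Finset.mem_union, not_or] at hp
      obtain ⟨⟨-, hσ⟩, hvR, hvX⟩ := hp
      simp only [Finset.mem_sigma, hA', Finset.mem_filter, Finset.mem_univ, true_and,
        Finset.mem_compl]
      refine ⟨fun x hx => ?_, hvR⟩
      have hxv : σ x ≠ v := by
        intro h; exact hvX (h ▸ Finset.mem_image_of_mem σ hx)
      simp only [Equiv.Perm.mul_apply, Finset.mem_insert, not_or]
      rcases eq_or_ne (σ x) j with h | h
      · rw [h, Equiv.swap_apply_right]
        have hvj : v ≠ j := fun hvj => hxv (by rw [hvj, h])
        exact ⟨hvj, hvR⟩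
      · rw [Equiv.swap_apply_of_ne_of_ne hxv h]
        exact ⟨h, hσ x hx⟩
    · rintro ⟨σ, v⟩ hp
      simp only [Finset.mem_coe] at hp ⊢
      simp only [Finset.mem_sigma, hA', Finset.mem_filter, Finset.mem_univ, true_and,
        Finset.mem_compl] at hp
      obtain ⟨hσ, hvR⟩ := hp
      simp only [Finset.mem_sigma, hA, Finset.mem_filter, Finset.mem_univ, true_and,
        Finset.mem_compl, Finset.mem_union, not_or]
      have hxj : ∀ x ∈ X, σ x ≠ j := fun x hx h =>
        (hσ x hx) (h ▸ Finset.mem_insert_self j R)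
      have hxR : ∀ x ∈ X, σ x ∉ R := fun x hx h =>
        (hσ x hx) (Finset.mem_insert_of_mem h)
      refine ⟨fun x hx => ?_, hvR, ?_⟩
      · simp only [Equiv.Perm.mul_apply]
        rcases eq_or_ne (σ x) v with h | h
        · rw [h, Equiv.swap_apply_left]; exact hj
        · rw [Equiv.swap_apply_of_ne_of_ne h (hxj x hx)]; exact hxR x hx
      · intro hvim
        simp only [Finset.mem_image] at hvim
        obtain ⟨x, hx, hxv⟩ := hvim
        simp only [Equiv.Perm.mul_apply] at hxv
        rcases eq_or_ne (σ x) v with h | h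
        · rw [h, Equiv.swap_apply_left] at hxv
          have : v ≠ j := fun hvj => (hxj x hx) (by rw [h, hvj])
          exact this hxv.symm
        · rw [Equiv.swap_apply_of_ne_of_ne h (hxj x hx)] at hxv
          exact h hxv
    · rintro ⟨σ, v⟩ hp
      simp only [Sigma.mk.inj_iff, heq_eq_eq, and_true]
      rw [← mul_assoc, Equiv.swap_mul_self, one_mul]
    · rintro ⟨σ, v⟩ hp
      simp only [Sigma.mk.inj_iff, heq_eq_eq, and_true]
      rw [← mul_assoc, Equiv.swap_mul_self, one_mul]
  rw [h1, h2] at hbij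
  calc (ℓ - R.card - X.card) * permCount X R
      = permCount X R * (ℓ - R.card - X.card) := mul_comm _ _
    _ = permCount X (insert j R) * (ℓ - R.card) := hbij
    _ = (ℓ - R.card) * permCount X (insert j R) := mul_comm _ _


lemma permCount_le (hℓ : 0 < ℓ) (X R : Finset (Fin ℓ)) :
    (permCount X R : ℝ) ≤ (((ℓ : ℝ) - X.card) / ℓ) ^ R.card * Nat.factorial ℓ := by
  classical
  have hXℓ : X.card ≤ ℓ := by
    simpa [Fintype.card_fin] using Finset.card_le_univ X
  have hbase0 : (0:ℝ) ≤ ((ℓ : ℝ) - X.card) / ℓ := by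
    apply div_nonneg _ (by positivity)
    have : (X.card : ℝ) ≤ ℓ := by exact_mod_cast hXℓ
    linarith
  induction R using Finset.induction_on with
  | empty => simp [permCount_empty]
  | @insert j R hj IH =>
    have hRℓ : R.card < ℓ := by
      have h1 : (insert j R).card ≤ ℓ := by
        simpa [Fintype.card_fin] using Finset.card_le_univ (insert j R)
      rw [Finset.card_insert_of_notMem hj] at h1
      omega
    have hid := permCount_identity X R j hj
    have hpos : (0:ℝ) < (ℓ - R.card : ℕ) := by
      have : 0 < ℓ - R.card := by omega
      exact_mod_cast this
    have hval : (permCount X (insert j R) : ℝ)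
        = (ℓ - R.card - X.card : ℕ) * permCount X R / (ℓ - R.card : ℕ) := by
      rw [eq_div_iff (ne_of_gt hpos)]
      have hid' : permCount X (insert j R) * (ℓ - R.card) = (ℓ - R.card - X.card) * permCount X R := by
        rw [mul_comm]; exact hid.symm
      exact_mod_cast hid'
    have hratio : ((ℓ - R.card - X.card : ℕ) : ℝ) / ((ℓ - R.card : ℕ) : ℝ)
        ≤ ((ℓ : ℝ) - X.card) / ℓ := by
      rw [div_le_div_iff₀ hpos (by exact_mod_cast hℓ)]
      rcases le_or_gt (R.card + X.card) ℓ with h | h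
      · have e1 : ((ℓ - R.card - X.card : ℕ) : ℝ) = (ℓ : ℝ) - R.card - X.card := by
          have : ℓ - R.card - X.card = ℓ - (R.card + X.card) := by omega
          rw [this]
          push_cast [Nat.cast_sub h]
          ring
        have e2 : ((ℓ - R.card : ℕ) : ℝ) = (ℓ : ℝ) - R.card := by
          push_cast [Nat.cast_sub (le_of_lt hRℓ)]
          ring
        rw [e1, e2]
        have hc : (0:ℝ) ≤ (X.card : ℝ) * R.card := by positivity
        nlinarith
      · have : ℓ - R.card - X.card = 0 := by omega
        rw [this]
        simp only [Nat.cast_zero, zero_mul]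
        have : (0:ℝ) ≤ ((ℓ:ℝ) - X.card) := by
          have : (X.card : ℝ) ≤ ℓ := by exact_mod_cast hXℓ
          linarith
        positivity
    calc (permCount X (insert j R) : ℝ)
        = ((ℓ - R.card - X.card : ℕ) : ℝ) / ((ℓ - R.card : ℕ) : ℝ) * permCount X R := by
          rw [hval]; ring
      _ ≤ (((ℓ : ℝ) - X.card) / ℓ) * permCount X R := by
          apply mul_le_mul_of_nonneg_right hratio (by positivity)
      _ ≤ (((ℓ : ℝ) - X.card) / ℓ) * ((((ℓ : ℝ) - X.card) / ℓ) ^ R.card * Nat.factorial ℓ) :=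
          mul_le_mul_of_nonneg_left IH hbase0
      _ = (((ℓ : ℝ) - X.card) / ℓ) ^ (insert j R).card * Nat.factorial ℓ := by
          rw [Finset.card_insert_of_notMem hj, pow_succ]
          ring
lemma pgf (hℓ : 0 < ℓ) (X Y : Finset (Fin ℓ)) (q : ℝ) (h0 : 0 ≤ q) (h1 : q ≤ 1) :
    ∑ σ : Equiv.Perm (Fin ℓ), q ^ (Y ∩ X.image σ).card
      ≤ (1 - ((X.card : ℝ) / ℓ) * (1 - q)) ^ Y.card * Nat.factorial ℓ := by
  classical
  have hXℓ : X.card ≤ ℓ := by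
    simpa [Fintype.card_fin] using Finset.card_le_univ X
  have hXℓ' : (X.card : ℝ) ≤ ℓ := by exact_mod_cast hXℓ
  have hbase0 : (0:ℝ) ≤ ((ℓ : ℝ) - X.card) / ℓ := by
    apply div_nonneg (by linarith) (by positivity)
  have step1 : ∀ σ : Equiv.Perm (Fin ℓ), q ^ (Y ∩ X.image σ).card
      = ∑ t ∈ Y.powerset,
          ((1-q) ^ t.card * (if ∀ x ∈ X, σ x ∉ t then (1:ℝ) else 0)) * q ^ (Y \ t).card := by
    intro σ
    have e1 : q ^ (Y ∩ X.image σ).card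
        = ∏ j ∈ Y, (((1-q) * (if j ∈ X.image σ then 0 else 1)) + q) := by
      rw [eq_comm]
      calc ∏ j ∈ Y, (((1-q) * (if j ∈ X.image σ then 0 else 1)) + q)
          = ∏ j ∈ Y, (if j ∈ X.image σ then q else 1) := by
            apply Finset.prod_congr rfl; intro j _; split <;> ring
        _ = ∏ _j ∈ Y ∩ X.image σ, q := Finset.prod_ite_mem _ _ _
        _ = q ^ (Y ∩ X.image σ).card := Finset.prod_const q
    rw [e1, Finset.prod_add]
    apply Finset.sum_congr rfl
    intro t _
    congr 1
    · rw [Finset.prod_mul_distrib, Finset.prod_const]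
      congr 1
      by_cases h : ∀ x ∈ X, σ x ∉ t
      · rw [if_pos h]
        apply Finset.prod_eq_one
        intro j hjt
        rw [if_neg]
        intro hjim
        obtain ⟨x, hx, rfl⟩ := Finset.mem_image.mp hjim
        exact h x hx hjt
      · rw [if_neg h]
        push_neg at h
        obtain ⟨x, hx, hxt⟩ := h
        exact Finset.prod_eq_zero hxt (by rw [if_pos (Finset.mem_image_of_mem σ hx)])
    · exact Finset.prod_const q
  calc ∑ σ : Equiv.Perm (Fin ℓ), q ^ (Y ∩ X.image σ).card
      = ∑ σ : Equiv.Perm (Fin ℓ), ∑ t ∈ Y.powerset,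
          ((1-q) ^ t.card * (if ∀ x ∈ X, σ x ∉ t then (1:ℝ) else 0)) * q ^ (Y \ t).card :=
        Finset.sum_congr rfl fun σ _ => step1 σ
    _ = ∑ t ∈ Y.powerset, ∑ σ : Equiv.Perm (Fin ℓ),
          ((1-q) ^ t.card * (if ∀ x ∈ X, σ x ∉ t then (1:ℝ) else 0)) * q ^ (Y \ t).card :=
        Finset.sum_comm
    _ = ∑ t ∈ Y.powerset, (1-q) ^ t.card * (permCount X t : ℝ) * q ^ (Y \ t).card := by
        apply Finset.sum_congr rfl
        intro t _
        rw [← Finset.sum_mul, ← Finset.mul_sum, Finset.sum_boole]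
        rfl
    _ ≤ ∑ t ∈ Y.powerset, (1-q) ^ t.card
          * ((((ℓ : ℝ) - X.card) / ℓ) ^ t.card * Nat.factorial ℓ) * q ^ (Y \ t).card := by
        apply Finset.sum_le_sum
        intro t _
        have := permCount_le hℓ X t
        have h1q : (0:ℝ) ≤ (1-q) ^ t.card := pow_nonneg (by linarith) _
        have hq : (0:ℝ) ≤ q ^ (Y \ t).card := by positivity
        exact mul_le_mul_of_nonneg_right (mul_le_mul_of_nonneg_left this h1q) hq
    _ = (∑ t ∈ Y.powerset, ((1-q) * (((ℓ : ℝ) - X.card) / ℓ)) ^ t.card * q ^ (Y \ t).card)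
          * Nat.factorial ℓ := by
        rw [Finset.sum_mul]
        apply Finset.sum_congr rfl
        intro t _
        rw [mul_pow]
        ring
    _ = ((1-q) * (((ℓ : ℝ) - X.card) / ℓ) + q) ^ Y.card * Nat.factorial ℓ := by
        congr 1
        have := Finset.prod_add (fun _ : Fin ℓ => (1-q) * (((ℓ : ℝ) - X.card) / ℓ))
          (fun _ : Fin ℓ => q) Y
        simp only [Finset.prod_const] at this
        rw [← this]
    _ = (1 - ((X.card : ℝ) / ℓ) * (1 - q)) ^ Y.card * Nat.factorial ℓ := by
        congr 2
        have hℓ' : (ℓ : ℝ) ≠ 0 := by positivity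
        field_simp
        ring
lemma main_ind (hℓ : 0 < ℓ) {z : ℕ} (hz : 0 < z) :
    ∀ (m : ℕ) (X : Fin m → Finset (Fin ℓ)), (∀ i, (ℓ : ℝ) / z ≤ (X i).card) →
    ∀ Y : Finset (Fin ℓ),
    ∑ π : Fin m → Equiv.Perm (Fin ℓ),
        (if ∀ j ∈ Y, ∃ i, j ∉ (X i).image (π i) then (1:ℝ) else 0)
      ≤ (1 - ((z : ℝ)⁻¹) ^ m) ^ Y.card * (Nat.factorial ℓ : ℝ) ^ m := by
  classical
  have hz1 : (1:ℝ) ≤ (z:ℝ) := by exact_mod_cast hz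
  have hzinv0 : (0:ℝ) ≤ (z:ℝ)⁻¹ := by positivity
  have hzinv1 : (z:ℝ)⁻¹ ≤ 1 := by
    rw [inv_le_one_iff₀]; right; exact hz1
  intro m
  induction m with
  | zero =>
    intro X hX Y
    rw [Fintype.sum_unique]
    by_cases hY : Y = ∅
    · subst hY
      simp
    · rw [if_neg]
      · have h0 : (1 : ℝ) - ((z:ℝ)⁻¹) ^ 0 = 0 := by norm_num
        rw [h0]
        positivity
      · intro h
        obtain ⟨j, hj⟩ := Finset.nonempty_iff_ne_empty.mpr hY
        obtain ⟨i, -⟩ := h j hj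
        exact i.elim0
  | succ m IH =>
    intro X hX Y
    set q : ℝ := 1 - ((z:ℝ)⁻¹) ^ m with hq
    have hq0 : 0 ≤ q := by
      have : ((z:ℝ)⁻¹) ^ m ≤ 1 := pow_le_one₀ hzinv0 hzinv1
      simp only [hq]; linarith
    have hq1 : q ≤ 1 := by
      have : 0 ≤ ((z:ℝ)⁻¹) ^ m := by positivity
      simp only [hq]; linarith
    have hsplit : ∑ π : Fin (m+1) → Equiv.Perm (Fin ℓ),
        (if ∀ j ∈ Y, ∃ i, j ∉ (X i).image (π i) then (1:ℝ) else 0)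
        = ∑ σ : Equiv.Perm (Fin ℓ), ∑ π' : Fin m → Equiv.Perm (Fin ℓ),
            (if ∀ j ∈ Y, ∃ i : Fin (m+1),
                j ∉ (X i).image ((Fin.cons σ π' : ∀ _ : Fin (m+1), Equiv.Perm (Fin ℓ)) i)
              then (1:ℝ) else 0) := by
      calc ∑ π : Fin (m+1) → Equiv.Perm (Fin ℓ),
              (if ∀ j ∈ Y, ∃ i, j ∉ (X i).image (π i) then (1:ℝ) else 0)
          = ∑ p : Equiv.Perm (Fin ℓ) × (Fin m → Equiv.Perm (Fin ℓ)),
              (if ∀ j ∈ Y, ∃ i : Fin (m+1),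
                  j ∉ (X i).image ((Fin.cons p.1 p.2 : ∀ _ : Fin (m+1), Equiv.Perm (Fin ℓ)) i)
                then (1:ℝ) else 0) :=
            (Fintype.sum_equiv (Fin.consEquiv fun _ => Equiv.Perm (Fin ℓ))
              (fun p => if ∀ j ∈ Y, ∃ i : Fin (m+1),
                  j ∉ (X i).image ((Fin.cons p.1 p.2 : ∀ _ : Fin (m+1), Equiv.Perm (Fin ℓ)) i)
                then (1:ℝ) else 0)
              (fun π => if ∀ j ∈ Y, ∃ i, j ∉ (X i).image (π i) then (1:ℝ) else 0)
              (fun p => rfl)).symm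
        _ = ∑ σ : Equiv.Perm (Fin ℓ), ∑ π' : Fin m → Equiv.Perm (Fin ℓ),
              (if ∀ j ∈ Y, ∃ i : Fin (m+1),
                  j ∉ (X i).image ((Fin.cons σ π' : ∀ _ : Fin (m+1), Equiv.Perm (Fin ℓ)) i)
                then (1:ℝ) else 0) := Fintype.sum_prod_type _
    have hcond : ∀ (σ : Equiv.Perm (Fin ℓ)) (π' : Fin m → Equiv.Perm (Fin ℓ)),
        (∀ j ∈ Y, ∃ i : Fin (m+1),
            j ∉ (X i).image ((Fin.cons σ π' : ∀ _ : Fin (m+1), Equiv.Perm (Fin ℓ)) i))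
        ↔ (∀ j ∈ Y ∩ (X 0).image σ, ∃ i : Fin m, j ∉ (X i.succ).image (π' i)) := by
      intro σ π'
      constructor
      · intro h j hj
        obtain ⟨hjY, hjim⟩ := Finset.mem_inter.mp hj
        rcases Fin.exists_fin_succ.mp (h j hjY) with h0 | ⟨i, hi⟩
        · rw [Fin.cons_zero] at h0; exact absurd hjim h0
        · rw [Fin.cons_succ] at hi; exact ⟨i, hi⟩
      · intro h j hjY
        by_cases hjim : j ∈ (X 0).image σ
        · obtain ⟨i, hi⟩ := h j (Finset.mem_inter.mpr ⟨hjY, hjim⟩)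
          exact ⟨i.succ, by rwa [Fin.cons_succ]⟩
        · exact ⟨0, by rwa [Fin.cons_zero]⟩
    rw [hsplit]
    have hfact0 : (0:ℝ) ≤ (Nat.factorial ℓ : ℝ) ^ m := by positivity
    calc ∑ σ : Equiv.Perm (Fin ℓ), ∑ π' : Fin m → Equiv.Perm (Fin ℓ),
            (if ∀ j ∈ Y, ∃ i : Fin (m+1),
                j ∉ (X i).image ((Fin.cons σ π' : ∀ _ : Fin (m+1), Equiv.Perm (Fin ℓ)) i)
              then (1:ℝ) else 0)
        ≤ ∑ σ : Equiv.Perm (Fin ℓ), q ^ (Y ∩ (X 0).image σ).card * (Nat.factorial ℓ : ℝ) ^ m := by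
          apply Finset.sum_le_sum
          intro σ _
          have : ∑ π' : Fin m → Equiv.Perm (Fin ℓ),
              (if ∀ j ∈ Y, ∃ i : Fin (m+1),
                  j ∉ (X i).image ((Fin.cons σ π' : ∀ _ : Fin (m+1), Equiv.Perm (Fin ℓ)) i)
                then (1:ℝ) else 0)
              = ∑ π' : Fin m → Equiv.Perm (Fin ℓ),
              (if ∀ j ∈ Y ∩ (X 0).image σ, ∃ i : Fin m, j ∉ (X i.succ).image (π' i)
                then (1:ℝ) else 0) := by
            apply Finset.sum_congr rfl
            intro π' _
            exact if_congr (hcond σ π') rfl rfl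
          rw [this]
          exact IH (fun i => X i.succ) (fun i => hX i.succ) (Y ∩ (X 0).image σ)
      _ = (∑ σ : Equiv.Perm (Fin ℓ), q ^ (Y ∩ (X 0).image σ).card)
            * (Nat.factorial ℓ : ℝ) ^ m := by rw [Finset.sum_mul]
      _ ≤ ((1 - (((X 0).card : ℝ) / ℓ) * (1 - q)) ^ Y.card * Nat.factorial ℓ)
            * (Nat.factorial ℓ : ℝ) ^ m :=
          mul_le_mul_of_nonneg_right (pgf hℓ (X 0) Y q hq0 hq1) hfact0
      _ ≤ (1 - ((z : ℝ)⁻¹) ^ (m+1)) ^ Y.card * (Nat.factorial ℓ : ℝ) ^ (m+1) := by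
          have hXcard : ((X 0).card : ℝ) / ℓ ≤ 1 := by
            have : (X 0).card ≤ ℓ := by
              simpa [Fintype.card_fin] using Finset.card_le_univ (X 0)
            rw [div_le_one (by exact_mod_cast hℓ)]
            exact_mod_cast this
          have hXz : (z:ℝ)⁻¹ ≤ ((X 0).card : ℝ) / ℓ := by
            rw [le_div_iff₀ (by exact_mod_cast hℓ), inv_mul_eq_div]
            exact hX 0
          have h1q : 1 - q = ((z:ℝ)⁻¹) ^ m := by simp [hq]
          have hb0 : 0 ≤ 1 - (((X 0).card : ℝ) / ℓ) * (1 - q) := by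
            have h2 : (((X 0).card : ℝ) / ℓ) * (1 - q) ≤ 1 * 1 :=
              mul_le_mul hXcard (by linarith) (by linarith) zero_le_one
            linarith
          have hbb : 1 - (((X 0).card : ℝ) / ℓ) * (1 - q) ≤ 1 - ((z : ℝ)⁻¹) ^ (m+1) := by
            rw [h1q, pow_succ']
            have := mul_le_mul_of_nonneg_right hXz (by positivity : (0:ℝ) ≤ ((z:ℝ)⁻¹) ^ m)
            linarith
          have hpow := pow_le_pow_left₀ hb0 hbb Y.card
          calc ((1 - (((X 0).card : ℝ) / ℓ) * (1 - q)) ^ Y.card * Nat.factorial ℓ)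
                * (Nat.factorial ℓ : ℝ) ^ m
              ≤ ((1 - ((z : ℝ)⁻¹) ^ (m+1)) ^ Y.card * Nat.factorial ℓ)
                * (Nat.factorial ℓ : ℝ) ^ m := by
                apply mul_le_mul_of_nonneg_right _ hfact0
                exact mul_le_mul_of_nonneg_right hpow (by positivity)
            _ = (1 - ((z : ℝ)⁻¹) ^ (m+1)) ^ Y.card * (Nat.factorial ℓ : ℝ) ^ (m+1) := by
                rw [pow_succ]
                ring
end Count

/-- Let `X 1, …, X k ⊆ {1, …, ℓ}` each have size at least `ℓ / z`, and let
`Π 1, …, Π k` be independent uniformly random permutations of `{1, …, ℓ}` (modelled as a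
uniformly random element of the product of the permutation groups). Then the probability
that the intersection `Π 1 (X 1) ∩ ⋯ ∩ Π k (X k)` is empty is at most `exp (-ℓ / z ^ k)`. -/
theorem prob_empty_intersection_le {k z ℓ : ℕ} (hk : 0 < k) (hz : 0 < z) (hℓ : 0 < ℓ)
    (X : Fin k → Finset (Fin ℓ)) (hX : ∀ i, (ℓ : ℝ) / z ≤ (X i).card) :
    uniformMeasure (Fin k → Equiv.Perm (Fin ℓ))
        {π | ∀ j : Fin ℓ, ∃ i : Fin k, j ∉ (X i).image (π i)} ≤
      ENNReal.ofReal (Real.exp (-((ℓ : ℝ) / (z : ℝ) ^ k))) := by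
  classical
  set S : Set (Fin k → Equiv.Perm (Fin ℓ)) :=
    {π | ∀ j : Fin ℓ, ∃ i : Fin k, j ∉ (X i).image (π i)} with hS
  have hzR : (0:ℝ) < z := by exact_mod_cast hz
  have hℓR : (0:ℝ) < ℓ := by exact_mod_cast hℓ
  -- measure computation
  have hμ : uniformMeasure (Fin k → Equiv.Perm (Fin ℓ)) S
      = ((Fintype.card (Fin k → Equiv.Perm (Fin ℓ)) : ENNReal))⁻¹
        * ((Set.toFinite S).toFinset.card : ENNReal) := by
    rw [uniformMeasure, Measure.smul_apply, smul_eq_mul,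
      @Measure.count_apply_finite' _ ⊤ S (Set.toFinite S) MeasurableSpace.measurableSet_top]
  -- counting bound
  have hmain := main_ind hℓ hz k X hX Finset.univ
  have hfilter : Finset.univ.filter
      (fun π : Fin k → Equiv.Perm (Fin ℓ) => ∀ j ∈ Finset.univ, ∃ i, j ∉ (X i).image (π i))
      = (Set.toFinite S).toFinset := by
    ext π
    simp [hS, Set.Finite.mem_toFinset]
  rw [Finset.sum_boole, hfilter] at hmain
  have hcard : (Fintype.card (Fin k → Equiv.Perm (Fin ℓ)) : ℝ)
      = (Nat.factorial ℓ : ℝ) ^ k := by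
    rw [Fintype.card_fun, Fintype.card_perm, Fintype.card_fin, Fintype.card_fin]
    push_cast
    ring
  -- real inequality
  set x : ℝ := ((z:ℝ)⁻¹) ^ k with hx
  have hx0 : 0 ≤ x := by positivity
  have hx1 : x ≤ 1 := by
    apply pow_le_one₀ (by positivity)
    rw [inv_le_one_iff₀]; right; exact_mod_cast hz
  have hexp : (1 - x) ^ ℓ ≤ Real.exp (-((ℓ : ℝ) / (z : ℝ) ^ k)) := by
    have h1 : (1 - x) ≤ Real.exp (-x) := by
      have := Real.add_one_le_exp (-x)
      linarith
    have h2 : (1 - x) ^ ℓ ≤ Real.exp (-x) ^ ℓ :=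
      pow_le_pow_left₀ (by linarith) h1 ℓ
    have h3 : Real.exp (-x) ^ ℓ = Real.exp (-((ℓ : ℝ) / (z : ℝ) ^ k)) := by
      rw [← Real.exp_nat_mul]
      congr 1
      rw [hx, inv_pow]
      field_simp
    rw [← h3]
    exact h2
  have hcardY : (Finset.univ : Finset (Fin ℓ)).card = ℓ := by
    rw [Finset.card_univ, Fintype.card_fin]
  rw [hcardY] at hmain
  have hreal : (((Set.toFinite S).toFinset.card : ℝ)
        / (Fintype.card (Fin k → Equiv.Perm (Fin ℓ)) : ℝ))
      ≤ Real.exp (-((ℓ : ℝ) / (z : ℝ) ^ k)) := by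
    have hNpos : (0:ℝ) < (Fintype.card (Fin k → Equiv.Perm (Fin ℓ)) : ℝ) := by
      rw [hcard]; positivity
    rw [div_le_iff₀ hNpos, hcard]
    calc ((Set.toFinite S).toFinset.card : ℝ)
        ≤ (1 - x) ^ ℓ * (Nat.factorial ℓ : ℝ) ^ k := hmain
      _ ≤ Real.exp (-((ℓ : ℝ) / (z : ℝ) ^ k)) * (Nat.factorial ℓ : ℝ) ^ k :=
          mul_le_mul_of_nonneg_right hexp (by positivity)
  rw [hμ]
  have hNpos' : (0:ℝ) < (Fintype.card (Fin k → Equiv.Perm (Fin ℓ)) : ℝ) := by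
    rw [hcard]; positivity
  calc ((Fintype.card (Fin k → Equiv.Perm (Fin ℓ)) : ENNReal))⁻¹
        * ((Set.toFinite S).toFinset.card : ENNReal)
      = ENNReal.ofReal (((Set.toFinite S).toFinset.card : ℝ)
          / (Fintype.card (Fin k → Equiv.Perm (Fin ℓ)) : ℝ)) := by
        rw [ENNReal.ofReal_div_of_pos hNpos', ENNReal.ofReal_natCast, ENNReal.ofReal_natCast,
          ENNReal.div_eq_inv_mul]
    _ ≤ ENNReal.ofReal (Real.exp (-((ℓ : ℝ) / (z : ℝ) ^ k))) :=
        ENNReal.ofReal_le_ofReal hreal
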